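/- Let X ∈ ℝ^{n×d}, let S₊, S₋ partition {1,…,n} with sizes n₊ ≥ 1, n₋ ≥ 1, and define the single-user AUC surrogate loss ℓ(w) = (1/(n₊ n₋)) Σ_{p ∈ S₊} Σ_{q ∈ S₋} (1 − wᵀ(x_p − x_q))² for w ∈ ℝ^d, where x_k is the k-th row of X. Then ∇ℓ is Lipschitz continuous with constant 2·n·‖X‖₂² / (n₊ n₋), where n = n₊ + n₋ and ‖X‖₂ is the spectral norm of X. -/

import Mathlib

open Matrix

/-- The spectral norm (largest singular value) of a real matrix. -/
noncomputable def matSpectralNorm {m n : ℕ} (A : Matrix (Fin m) (Fin n) ℝ) : ℝ :=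
  Real.sqrt (⨆ i, (show (Aᵀ * A).IsHermitian by
    simpa using Matrix.isHermitian_conjTranspose_mul_self A).eigenvalues i)

/-- The single-user empirical AUC surrogate loss
`ℓ(w) = (1/(n₊n₋)) Σ_{p∈S₊} Σ_{q∈S₋} (1 − wᵀ(x_p − x_q))²`
of the linear scoring function `f(x) = wᵀx`, where `x_k` is the `k`-th row
of `X`. -/
noncomputable def userLoss {n d : ℕ} (X : Matrix (Fin n) (Fin d) ℝ)
    (Sp Sm : Finset (Fin n)) (w : EuclideanSpace ℝ (Fin d)) : ℝ :=
  (1 / ((Sp.card : ℝ) * (Sm.card : ℝ))) *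
    ∑ p ∈ Sp, ∑ q ∈ Sm, (1 - ∑ k : Fin d, w k * (X p k - X q k)) ^ 2

/-!
The loss is a quadratic in `w`. With `v_pq = x_p - x_q`,
`∇ℓ(w) - ∇ℓ(w') = (2 / (n₊ n₋)) Σ ⟪v_pq, w - w'⟫ v_pq`, and by Cauchy–Schwarz the operator
`u ↦ Σ ⟪v_pq, u⟫ v_pq` has norm at most any `K` with `Σ ⟪v_pq, z⟫² ≤ K ‖z‖²`. Putting `y = X z`,
`⟪v_pq, z⟫ = y_p - y_q`, and since `S₊`, `S₋` are disjoint,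
`Σ (y_p - y_q)² ≤ (n₊ + n₋) ‖y‖² ≤ (n₊ + n₋) ‖X‖₂² ‖z‖²`, the last step being the Rayleigh
bound for the largest eigenvalue of `XᵀX`.
-/

open scoped RealInnerProductSpace Gradient
open Finset

lemma Matrix.IsHermitian.inner_toEuclideanLin_self_le {ι : Type*} [Fintype ι] [DecidableEq ι]
    {A : Matrix ι ι ℝ} (hA : A.IsHermitian) (u : EuclideanSpace ℝ ι) :
    ⟪u, A.toEuclideanLin u⟫ ≤ (⨆ i, hA.eigenvalues i) * ‖u‖ ^ 2 := by
  set b := hA.eigenvectorBasis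
  have hb (i : ι) : A.toEuclideanLin (b i) = hA.eigenvalues i • b i := by
    rw [toLpLin_apply, hA.mulVec_eigenvectorBasis]; rfl
  calc ⟪u, A.toEuclideanLin u⟫ = ∑ i, ⟪u, b i⟫ * ⟪b i, A.toEuclideanLin u⟫ :=
        (b.sum_inner_mul_inner _ _).symm
    _ = ∑ i, hA.eigenvalues i * ⟪b i, u⟫ ^ 2 := by
        refine sum_congr rfl fun i _ => ?_
        rw [← isSymmetric_toEuclideanLin_iff.mpr hA, hb, real_inner_smul_left,
          real_inner_comm u]
        ring
    _ ≤ ∑ i, (⨆ j, hA.eigenvalues j) * ⟪b i, u⟫ ^ 2 := by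
        gcongr with i
        exact le_ciSup (Set.finite_range _).bddAbove i
    _ = (⨆ i, hA.eigenvalues i) * ‖u‖ ^ 2 := by
        simp only [← mul_sum, ← b.sum_sq_norm_inner_right u, Real.norm_eq_abs, sq_abs]

lemma Matrix.norm_toEuclideanLin_apply_le {m k : ℕ} (A : Matrix (Fin m) (Fin k) ℝ)
    (u : EuclideanSpace ℝ (Fin k)) :
    ‖A.toEuclideanLin u‖ ≤ matSpectralNorm A * ‖u‖ := by
  have hAA : (Aᵀ * A).IsHermitian := by simpa using isHermitian_conjTranspose_mul_self A
  have hσ : matSpectralNorm A ^ 2 = ⨆ i, hAA.eigenvalues i :=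
    Real.sq_sqrt (Real.iSup_nonneg fun i => by
      simpa using eigenvalues_conjTranspose_mul_self_nonneg A i)
  have hnorm : ‖A.toEuclideanLin u‖ ^ 2 = ⟪u, (Aᵀ * A).toEuclideanLin u⟫ := by
    rw [← conjTranspose_eq_transpose_of_trivial, toLpLin_mul (q := 2), LinearMap.comp_apply,
      toEuclideanLin_conjTranspose_eq_adjoint, LinearMap.adjoint_inner_right,
      real_inner_self_eq_norm_sq]
  have hσ0 : 0 ≤ matSpectralNorm A := Real.sqrt_nonneg _
  refine (pow_le_pow_iff_left₀ (norm_nonneg _) (by positivity) two_ne_zero).mp ?_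
  rw [mul_pow, hnorm, hσ]
  exact hAA.inner_toEuclideanLin_self_le u

lemma Finset.sum_sum_sub_sq_le {ι κ : Type*} (s : Finset ι) (t : Finset κ) (a : ι → ℝ)
    (b : κ → ℝ) :
    ∑ i ∈ s, ∑ j ∈ t, (a i - b j) ^ 2 ≤
      (#s + #t : ℝ) * (∑ i ∈ s, a i ^ 2 + ∑ j ∈ t, b j ^ 2) := by
  have hexpand : ∑ i ∈ s, ∑ j ∈ t, (a i - b j) ^ 2 =
      #t * ∑ i ∈ s, a i ^ 2 - 2 * (∑ i ∈ s, a i) * (∑ j ∈ t, b j) + #s * ∑ j ∈ t, b j ^ 2 := by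
    simp only [sub_sq, sum_add_distrib, sum_sub_distrib, sum_const, nsmul_eq_mul, mul_sum,
      sum_mul]
    rw [sum_comm (s := t)]
  have ha := sq_sum_le_card_mul_sum_sq (s := s) (f := a)
  have hb := sq_sum_le_card_mul_sum_sq (s := t) (f := b)
  rw [hexpand]
  -- Cauchy–Schwarz on each side plus `(Σ a + Σ b)² ≥ 0` absorbs the cross term.
  nlinarith [sq_nonneg (∑ i ∈ s, a i + ∑ j ∈ t, b j)]

section InnerProductSpace

variable {E ι : Type*} [NormedAddCommGroup E] [InnerProductSpace ℝ E]

lemma norm_sum_inner_smul_le (s : Finset ι) (v : ι → E) {K : ℝ} (hK : 0 ≤ K)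
    (hv : ∀ z, ∑ i ∈ s, ⟪v i, z⟫ ^ 2 ≤ K * ‖z‖ ^ 2) (u : E) :
    ‖∑ i ∈ s, ⟪v i, u⟫ • v i‖ ≤ K * ‖u‖ := by
  set T := ∑ i ∈ s, ⟪v i, u⟫ • v i
  have hT : ‖T‖ ^ 2 = ∑ i ∈ s, ⟪v i, u⟫ * ⟪v i, T⟫ := by
    rw [← real_inner_self_eq_norm_sq]
    simp only [T, sum_inner, real_inner_smul_left]
  have hsq : (‖T‖ ^ 2) ^ 2 ≤ (K * ‖u‖ * ‖T‖) ^ 2 :=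
    calc (‖T‖ ^ 2) ^ 2 ≤ (∑ i ∈ s, ⟪v i, u⟫ ^ 2) * ∑ i ∈ s, ⟪v i, T⟫ ^ 2 := by
          rw [hT]; exact sum_mul_sq_le_sq_mul_sq _ _ _
      _ ≤ (K * ‖u‖ ^ 2) * (K * ‖T‖ ^ 2) :=
          mul_le_mul (hv u) (hv T) (sum_nonneg fun _ _ => sq_nonneg _) (by positivity)
      _ = (K * ‖u‖ * ‖T‖) ^ 2 := by ring
  have h := (pow_le_pow_iff_left₀ (by positivity) (by positivity) two_ne_zero).mp hsq
  rcases (norm_nonneg T).eq_or_lt with hzero | hpos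
  · rw [← hzero]; positivity
  · exact le_of_mul_le_mul_right (by rwa [← sq]) hpos

variable [CompleteSpace E]

lemma hasGradientAt_one_sub_inner_sq (v w : E) :
    HasGradientAt (fun x => (1 - ⟪v, x⟫) ^ 2) ((2 * (⟪v, w⟫ - 1)) • v) w := by
  have hsq : HasDerivAt (fun t : ℝ => (1 - t) ^ 2) (2 * (⟪v, w⟫ - 1)) ⟪v, w⟫ :=
    (((hasDerivAt_id' _).const_sub (1 : ℝ)).fun_pow 2).congr_deriv (by norm_num; ring)
  rw [hasGradientAt_iff_hasFDerivAt]
  refine (hsq.comp_hasFDerivAt w (innerSL ℝ v).hasFDerivAt).congr_fderiv ?_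
  ext x
  simp

lemma hasGradientAt_const_mul_sum_one_sub_inner_sq (c : ℝ) (s : Finset ι) (v : ι → E) (w : E) :
    HasGradientAt (fun x => c * ∑ i ∈ s, (1 - ⟪v i, x⟫) ^ 2)
      (c • ∑ i ∈ s, (2 * (⟪v i, w⟫ - 1)) • v i) w := by
  rw [hasGradientAt_iff_hasFDerivAt, map_smul, map_sum]
  exact (HasFDerivAt.fun_sum fun i _ =>
    hasGradientAt_iff_hasFDerivAt.mp (hasGradientAt_one_sub_inner_sq (v i) w)).const_mul c

lemma gradient_const_mul_sum_one_sub_inner_sq_sub (c : ℝ) (s : Finset ι) (v : ι → E)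
    (w w' : E) :
    ∇ (fun x => c * ∑ i ∈ s, (1 - ⟪v i, x⟫) ^ 2) w -
        ∇ (fun x => c * ∑ i ∈ s, (1 - ⟪v i, x⟫) ^ 2) w' =
      (2 * c) • ∑ i ∈ s, ⟪v i, w - w'⟫ • v i := by
  rw [(hasGradientAt_const_mul_sum_one_sub_inner_sq c s v w).gradient,
    (hasGradientAt_const_mul_sum_one_sub_inner_sq c s v w').gradient, ← smul_sub,
    ← sum_sub_distrib, smul_sum, smul_sum]
  refine sum_congr rfl fun i _ => ?_
  rw [← sub_smul, smul_smul, smul_smul, inner_sub_right]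
  ring_nf

end InnerProductSpace

section AUC

variable {n d : ℕ} (X : Matrix (Fin n) (Fin d) ℝ)

def euclideanRow (p : Fin n) : EuclideanSpace ℝ (Fin d) := WithLp.toLp 2 (X p)

lemma inner_euclideanRow (p : Fin n) (z : EuclideanSpace ℝ (Fin d)) :
    ⟪euclideanRow X p, z⟫ = X.toEuclideanLin z p := by
  simp [euclideanRow, toLpLin_apply, mulVec, dotProduct, PiLp.inner_apply, mul_comm]

lemma userLoss_eq (Sp Sm : Finset (Fin n)) :
    userLoss X Sp Sm = fun w => 1 / ((#Sp : ℝ) * #Sm) *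
      ∑ pq ∈ Sp ×ˢ Sm, (1 - ⟪euclideanRow X pq.1 - euclideanRow X pq.2, w⟫) ^ 2 := by
  ext w
  rw [userLoss, sum_product]
  simp [euclideanRow, PiLp.inner_apply, mul_comm]

lemma sum_inner_euclideanRow_sub_sq_le {Sp Sm : Finset (Fin n)} (hdisj : Disjoint Sp Sm)
    (z : EuclideanSpace ℝ (Fin d)) :
    ∑ pq ∈ Sp ×ˢ Sm, ⟪euclideanRow X pq.1 - euclideanRow X pq.2, z⟫ ^ 2 ≤
      ((#Sp + #Sm) * matSpectralNorm X ^ 2) * ‖z‖ ^ 2 := by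
  set y := X.toEuclideanLin z
  simp only [sum_product, inner_sub_left, inner_euclideanRow]
  calc ∑ p ∈ Sp, ∑ q ∈ Sm, (y p - y q) ^ 2
      ≤ (#Sp + #Sm) * (∑ p ∈ Sp, y p ^ 2 + ∑ q ∈ Sm, y q ^ 2) := sum_sum_sub_sq_le _ _ _ _
    _ ≤ (#Sp + #Sm) * ‖y‖ ^ 2 := by
        rw [← sum_union hdisj, EuclideanSpace.norm_sq_eq]
        simp only [Real.norm_eq_abs, sq_abs]
        exact mul_le_mul_of_nonneg_left (sum_le_univ_sum_of_nonneg fun i => sq_nonneg (y i))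
          (by positivity)
    _ ≤ ((#Sp + #Sm) * matSpectralNorm X ^ 2) * ‖z‖ ^ 2 := by
        rw [mul_assoc, ← mul_pow]
        gcongr
        exact norm_toEuclideanLin_apply_le X z

end AUC

theorem stmt7_general {n d : ℕ} (X : Matrix (Fin n) (Fin d) ℝ)
    (Sp Sm : Finset (Fin n))
    (hdisj : Disjoint Sp Sm) :
    ∀ w w' : EuclideanSpace ℝ (Fin d),
      ‖gradient (userLoss X Sp Sm) w - gradient (userLoss X Sp Sm) w'‖ ≤
        (2 * ((Sp.card : ℝ) + (Sm.card : ℝ)) * matSpectralNorm X ^ 2 /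
          ((Sp.card : ℝ) * (Sm.card : ℝ))) * ‖w - w'‖ := by
  intro w w'
  rw [userLoss_eq, gradient_const_mul_sum_one_sub_inner_sq_sub, norm_smul,
    Real.norm_of_nonneg (by positivity)]
  calc _ ≤ 2 * (1 / ((#Sp : ℝ) * #Sm)) * ((#Sp + #Sm) * matSpectralNorm X ^ 2 * ‖w - w'‖) := by
        gcongr
        exact norm_sum_inner_smul_le _ _ (by positivity)
          (sum_inner_euclideanRow_sub_sq_le X hdisj) (w - w')
    _ = _ := by ring

/-- the gradient of the single-user AUC surrogate loss is
Lipschitz continuous with constant `2 n ‖X‖₂² / (n₊ n₋)`, `n = n₊ + n₋`. -/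
theorem stmt7 {n d : ℕ} (X : Matrix (Fin n) (Fin d) ℝ)
    (Sp Sm : Finset (Fin n))
    (hdisj : Disjoint Sp Sm) (hunion : Sp ∪ Sm = Finset.univ)
    (hp : 1 ≤ Sp.card) (hm : 1 ≤ Sm.card) :
    ∀ w w' : EuclideanSpace ℝ (Fin d),
      ‖gradient (userLoss X Sp Sm) w - gradient (userLoss X Sp Sm) w'‖ ≤
        (2 * ((Sp.card : ℝ) + (Sm.card : ℝ)) * matSpectralNorm X ^ 2 /
          ((Sp.card : ℝ) * (Sm.card : ℝ))) * ‖w - w'‖ :=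
  stmt7_general X Sp Sm hdisj
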